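/- arXiv:1407.6830 — 5 statements merged into one kernel-verified Lean document; each statement's English description precedes it below -/
import Mathlib

section
/- Let H, K be complex Hilbert spaces, (X,μ) and (Y,μ') measure spaces, ρ : Y → X a measurable bijection such that the pushforward of μ' under ρ equals μ, T : H → K a bounded linear bijection with bounded inverse, and τ : Y → ℂ measurable with |τ(y)| = 1 for all y. Let Ψ, Φ : X → H be weakly measurable and define Ψ̃(y) := τ(y)·T(Ψ(ρ(y))) and Φ̃(y) := τ(y)·T(Φ(ρ(y))). Then (Ψ,Φ) is a reproducing pair for H with respect to (X,μ) if and only if (Ψ̃,Φ̃) is a reproducing pair for K with respect to (Y,μ'). -/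
/-!
Since `|τ| = 1`, the phase cancels against its conjugate, so the integrand of `(Ψ̃, Φ̃)` at
`(f, g)` is the integrand of `(Ψ, Φ)` at `(T† f, T† g)` composed with `ρ`; as `ρ` pushes `μ'`
to `μ`, the form of `(Ψ̃, Φ̃)` is the form of `(Ψ, Φ)` precomposed with `T†` in both slots.
An invertible `C` representing the latter gives `T C T†` representing the former, and
conversely with `T⁻¹` in place of `T`.
-/

open MeasureTheory ContinuousLinearMap
open scoped InnerProductSpace InnerProduct

section

variable {𝕜 E F : Type*} [RCLike 𝕜]
  [NormedAddCommGroup E] [InnerProductSpace 𝕜 E] [NormedAddCommGroup F] [InnerProductSpace 𝕜 F]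

theorem measurable_inner_mul_inner {X : Type*} [MeasurableSpace X] {Ψ Φ : X → E}
    (hΨ : ∀ f : E, Measurable fun x => ⟪f, Ψ x⟫_𝕜) (hΦ : ∀ f : E, Measurable fun x => ⟪f, Φ x⟫_𝕜)
    (u v : E) : Measurable fun x => ⟪u, Ψ x⟫_𝕜 * ⟪Φ x, v⟫_𝕜 := by
  simp only [← inner_conj_symm (Φ _) v]
  exact (hΨ u).mul (RCLike.continuous_conj.measurable.comp (hΦ v))

variable [CompleteSpace E] [CompleteSpace F]

namespace ContinuousLinearEquiv

noncomputable def adjoint (T : E ≃L[𝕜] F) : F ≃L[𝕜] E :=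
  equivOfInverse ((T : E →L[𝕜] F)†) ((T.symm : F →L[𝕜] E)†)
    (fun x => by
      rw [← comp_apply, ← ContinuousLinearMap.adjoint_comp, coe_comp_coe_symm,
        ContinuousLinearMap.adjoint_id, id_apply])
    (fun x => by
      rw [← comp_apply, ← ContinuousLinearMap.adjoint_comp, coe_symm_comp_coe,
        ContinuousLinearMap.adjoint_id, id_apply])

theorem adjoint_symm (T : E ≃L[𝕜] F) : T.adjoint.symm = T.symm.adjoint := rfl

theorem exists_inner_eq_adjoint_of_exists_inner_eq (T : E ≃L[𝕜] F) {B : E → E → 𝕜}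
    (h : ∃ C : E ≃L[𝕜] E, ∀ f g, ⟪C f, g⟫_𝕜 = B f g) :
    ∃ C : F ≃L[𝕜] F, ∀ f g, ⟪C f, g⟫_𝕜 = B (T.adjoint f) (T.adjoint g) := by
  obtain ⟨C, hC⟩ := h
  refine ⟨T.adjoint.trans (C.trans T), fun f g => ?_⟩
  rw [trans_apply, trans_apply, ← coe_coe T, ← adjoint_inner_right, hC]
  rfl

theorem exists_inner_eq_iff_exists_inner_eq_adjoint (T : E ≃L[𝕜] F) (B : E → E → 𝕜) :
    (∃ C : E ≃L[𝕜] E, ∀ f g, ⟪C f, g⟫_𝕜 = B f g) ↔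
      ∃ C : F ≃L[𝕜] F, ∀ f g, ⟪C f, g⟫_𝕜 = B (T.adjoint f) (T.adjoint g) := by
  refine ⟨T.exists_inner_eq_adjoint_of_exists_inner_eq, fun h => ?_⟩
  -- the forward direction for `T⁻¹`, since `(T⁻¹)† = (T†)⁻¹`
  simpa only [← adjoint_symm, apply_symm_apply] using
    T.symm.exists_inner_eq_adjoint_of_exists_inner_eq h

end ContinuousLinearEquiv

theorem inner_smul_apply_mul_inner_smul_apply {c : 𝕜} (hc : ‖c‖ = 1) (T : E →L[𝕜] F)
    (f g : F) (u v : E) :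
    ⟪f, c • T u⟫_𝕜 * ⟪c • T v, g⟫_𝕜 = ⟪(T†) f, u⟫_𝕜 * ⟪v, (T†) g⟫_𝕜 := by
  have hc' : c * (starRingEnd 𝕜) c = 1 := by rw [RCLike.mul_conj, hc]; simp
  rw [inner_smul_right, inner_smul_left, adjoint_inner_left, adjoint_inner_right]
  linear_combination (⟪f, T u⟫_𝕜 * ⟪T v, g⟫_𝕜) * hc'

theorem integral_inner_smul_mul_inner_smul_comp {X Y : Type*} [MeasurableSpace X]
    [MeasurableSpace Y] (μ' : Measure Y) {ρ : Y → X} (hρ : Measurable ρ) {τ : Y → 𝕜}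
    (hτ : ∀ y, ‖τ y‖ = 1) (T : E →L[𝕜] F) {Ψ Φ : X → E} (f g : F)
    (hmeas : AEStronglyMeasurable (fun x => ⟪(T†) f, Ψ x⟫_𝕜 * ⟪Φ x, (T†) g⟫_𝕜) (μ'.map ρ)) :
    ∫ y, ⟪f, τ y • T (Ψ (ρ y))⟫_𝕜 * ⟪τ y • T (Φ (ρ y)), g⟫_𝕜 ∂μ' =
      ∫ x, ⟪(T†) f, Ψ x⟫_𝕜 * ⟪Φ x, (T†) g⟫_𝕜 ∂(μ'.map ρ) := by
  simp_rw [inner_smul_apply_mul_inner_smul_apply (hτ _)]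
  rw [integral_map hρ.aemeasurable hmeas]

end

theorem stmt_0_general
    {H K : Type*} [NormedAddCommGroup H] [InnerProductSpace ℂ H] [CompleteSpace H]
    [NormedAddCommGroup K] [InnerProductSpace ℂ K] [CompleteSpace K]
    {X Y : Type*} [MeasurableSpace X] [MeasurableSpace Y]
    (μ : Measure X) (μ' : Measure Y)
    (ρ : Y → X) (hρ_meas : Measurable ρ)
    (hρ_push : μ'.map ρ = μ)
    (T : H ≃L[ℂ] K)
    (τ : Y → ℂ) (hτ_mod : ∀ y, ‖τ y‖ = 1)
    (Ψ Φ : X → H)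
    (hΨ : ∀ f : H, Measurable fun x => ⟪f, Ψ x⟫_ℂ)
    (hΦ : ∀ f : H, Measurable fun x => ⟪f, Φ x⟫_ℂ) :
    (∃ C : H ≃L[ℂ] H, ∀ f g : H,
        ⟪C f, g⟫_ℂ = ∫ x, ⟪f, Ψ x⟫_ℂ * ⟪Φ x, g⟫_ℂ ∂μ) ↔
    (∃ C : K ≃L[ℂ] K, ∀ f g : K,
        ⟪C f, g⟫_ℂ
          = ∫ y, ⟪f, τ y • T (Ψ (ρ y))⟫_ℂ * ⟪τ y • T (Φ (ρ y)), g⟫_ℂ ∂μ') := by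
  have change_of_variables : ∀ f g : K,
      ∫ y, ⟪f, τ y • T (Ψ (ρ y))⟫_ℂ * ⟪τ y • T (Φ (ρ y)), g⟫_ℂ ∂μ' =
        ∫ x, ⟪T.adjoint f, Ψ x⟫_ℂ * ⟪Φ x, T.adjoint g⟫_ℂ ∂μ := fun f g => by
    subst hρ_push
    exact integral_inner_smul_mul_inner_smul_comp μ' hρ_meas hτ_mod (T : H →L[ℂ] K) f g
      (measurable_inner_mul_inner hΨ hΦ _ _).aestronglyMeasurable
  simp only [change_of_variables]
  exact T.exists_inner_eq_iff_exists_inner_eq_adjoint _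

/-- Reproducing pairs are stable under measure-space isomorphism,
unimodular weight and bounded invertible operators:
`(Ψ,Φ)` is a reproducing pair for `H` w.r.t. `(X,μ)` iff
`(Ψ̃,Φ̃)`, with `Ψ̃(y) = τ(y) • T (Ψ (ρ y))` and `Φ̃(y) = τ(y) • T (Φ (ρ y))`,
is a reproducing pair for `K` w.r.t. `(Y,μ')`. -/
theorem stmt_0
    {H K : Type*} [NormedAddCommGroup H] [InnerProductSpace ℂ H] [CompleteSpace H]
    [NormedAddCommGroup K] [InnerProductSpace ℂ K] [CompleteSpace K]
    {X Y : Type*} [MeasurableSpace X] [MeasurableSpace Y]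
    (μ : Measure X) (μ' : Measure Y)
    (ρ : Y → X) (hρ_meas : Measurable ρ) (hρ_bij : Function.Bijective ρ)
    (hρ_push : μ'.map ρ = μ)
    (T : H ≃L[ℂ] K)
    (τ : Y → ℂ) (hτ_meas : Measurable τ) (hτ_mod : ∀ y, ‖τ y‖ = 1)
    (Ψ Φ : X → H)
    (hΨ : ∀ f : H, Measurable fun x => ⟪f, Ψ x⟫_ℂ)
    (hΦ : ∀ f : H, Measurable fun x => ⟪f, Φ x⟫_ℂ) :
    (∃ C : H ≃L[ℂ] H, ∀ f g : H,
        ⟪C f, g⟫_ℂ = ∫ x, ⟪f, Ψ x⟫_ℂ * ⟪Φ x, g⟫_ℂ ∂μ) ↔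
    (∃ C : K ≃L[ℂ] K, ∀ f g : K,
        ⟪C f, g⟫_ℂ
          = ∫ y, ⟪f, τ y • T (Ψ (ρ y))⟫_ℂ * ⟪τ y • T (Φ (ρ y)), g⟫_ℂ ∂μ') :=
  stmt_0_general μ μ' ρ hρ_meas hρ_push T τ hτ_mod Ψ Φ hΨ hΦ
end

section
/- Let (X,μ) be a measure space, H a complex Hilbert space, and (Ψ,Φ) a reproducing pair for H with resolution operator C (bounded with bounded inverse, ⟨Cf,g⟩ = ∫_X ⟨f,Ψ(x)⟩⟨Φ(x),g⟩ dμ(x) for all f,g ∈ H). For f ∈ H set F(x) := ⟨f, Ψ(x)⟩. Then for every x ∈ X, ∫_X F(y) ⟨Φ(y), (C⁻¹)* Ψ(x)⟩ dμ(y) = F(x); that is, every function in the range of the analysis map V_Ψ is reproduced by the kernel R(x,y) = ⟨C⁻¹Φ(y), Ψ(x)⟩. -/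
open MeasureTheory
open scoped InnerProductSpace

/-- If `(Ψ,Φ)` is a reproducing pair with resolution operator `C` and
`F(x) = ⟨f,Ψ(x)⟩`, then `F` is reproduced by the kernel
`R(x,y) = ⟨C⁻¹ Φ(y), Ψ(x)⟫`, i.e. `∫ F(y) ⟨Φ(y), (C⁻¹)* Ψ(x)⟩ dμ(y) = F(x)` for all `x`. -/
theorem stmt_2
    {H : Type*} [NormedAddCommGroup H] [InnerProductSpace ℂ H] [CompleteSpace H]
    {X : Type*} [MeasurableSpace X] (μ : Measure X)
    (Ψ Φ : X → H)
    (hΨ : ∀ f : H, Measurable fun x => ⟪f, Ψ x⟫_ℂ)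
    (hΦ : ∀ f : H, Measurable fun x => ⟪f, Φ x⟫_ℂ)
    (C : H ≃L[ℂ] H)
    (hC : ∀ f g : H, ⟪C f, g⟫_ℂ = ∫ x, ⟪f, Ψ x⟫_ℂ * ⟪Φ x, g⟫_ℂ ∂μ)
    (f : H) :
    ∀ x : X,
      (∫ y, ⟪f, Ψ y⟫_ℂ *
          ⟪Φ y, ContinuousLinearMap.adjoint (C.symm : H →L[ℂ] H) (Ψ x)⟫_ℂ ∂μ)
        = ⟪f, Ψ x⟫_ℂ := by
  intro x
  rw [← hC f _, ContinuousLinearMap.adjoint_inner_right]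
  simp
end

section
/- Let ψ ∈ L²(ℝ) be such that its Fourier transform ψ̂ is continuous, and suppose: (i) there exists ξ₀ ≠ 0 such that inf_{a∈[1,2]} |ψ̂(aξ₀)| > 0 and inf_{a∈[1,2]} |ψ̂(−aξ₀)| > 0; and (ii) there exists C > 0 with |ψ̂(ξ)|² ≤ C|ξ|/(1+|ξ|)² for all ξ ∈ ℝ. Then there exist constants 0 < A ≤ B < ∞ such that A ≤ Σ_{j∈ℤ} |ψ̂(2^j ξ)|² ≤ B for every ξ ≠ 0; i.e. the Fourier symbol m_Ψ(ξ) = Σ_{j∈ℤ} |ψ̂(2^j ξ)|² of the semi-discrete dyadic wavelet system is bounded above and below. -/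
open MeasureTheory ComplexConjugate
open scoped InnerProductSpace FourierTransform ENNReal

/-!
Write `g(ξ) = ‖ψ̂(ξ)‖²`. The decay hypothesis gives `g(ξ) ≤ C · min(|ξ|, |ξ|⁻¹)`, so if
`|ξ| ≈ 2^n` then `g(2^j ξ) ≤ 2C · 2^{-|j+n|}`: the dyadic sum is dominated by a two-sided
geometric series, uniformly in `ξ`. For the lower bound, every `ξ ≠ 0` has a dyadic dilate
`2^j ξ = ± a ξ₀` with `a ∈ [1, 2]`, and that single term is at least the square of the smaller
of the two infima.
-/

open Set

theorem hasSum_two_zpow_neg_abs : HasSum (fun j : ℤ => (2 : ℝ) ^ (-|j|)) 3 := by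
  have hnat : HasSum (fun n : ℕ => (2 : ℝ) ^ (-|(n : ℤ)|)) 2 := by
    convert hasSum_geometric_two using 2 with n
    simp [zpow_neg]
  have hneg : HasSum (fun n : ℕ => (2 : ℝ) ^ (-|-((n : ℤ) + 1)|)) 1 := by
    convert hasSum_geometric_two' 1 using 2 with n
    rw [abs_neg, abs_of_nonneg (by positivity), zpow_neg, zpow_add_one₀ two_ne_zero]
    simp [div_eq_mul_inv]
  rw [show (3 : ℝ) = 2 + 1 by norm_num]
  exact HasSum.of_nat_of_neg_add_one (f := fun j : ℤ => (2 : ℝ) ^ (-|j|)) hnat hneg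

theorem hasSum_two_zpow_neg_abs_add (k : ℤ) :
    HasSum (fun j : ℤ => (2 : ℝ) ^ (-|j + k|)) 3 :=
  (Equiv.addRight k).hasSum_iff (f := fun j : ℤ => (2 : ℝ) ^ (-|j|)) |>.mpr
    hasSum_two_zpow_neg_abs

theorem div_one_add_sq_le_min {t : ℝ} (ht : 0 ≤ t) : t / (1 + t) ^ 2 ≤ min t t⁻¹ := by
  refine le_min (div_le_self ht (by nlinarith)) ?_
  rcases ht.eq_or_lt with rfl | ht
  · simp
  rw [div_le_iff₀ (by positivity), inv_mul_eq_div, le_div_iff₀ ht]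
  nlinarith

theorem min_self_inv_le_of_mem_Ico_zpow {t : ℝ} {m : ℤ}
    (ht : t ∈ Ico ((2 : ℝ) ^ m) (2 ^ (m + 1))) : min t t⁻¹ ≤ 2 * 2 ^ (-|m|) := by
  have h2m : (0 : ℝ) < 2 ^ m := by positivity
  rcases le_or_gt 0 m with hm | hm
  · calc min t t⁻¹ ≤ t⁻¹ := min_le_right _ _
      _ ≤ 2 ^ (-m) := by rw [zpow_neg]; exact inv_anti₀ h2m ht.1
      _ ≤ 2 * 2 ^ (-|m|) := by
        rw [abs_of_nonneg hm]; linarith [zpow_pos (two_pos (α := ℝ)) (-m)]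
  · calc min t t⁻¹ ≤ t := min_le_left _ _
      _ ≤ 2 ^ (m + 1) := ht.2.le
      _ = 2 * 2 ^ (-|m|) := by
        rw [abs_of_neg hm, neg_neg, zpow_add_one₀ two_ne_zero, mul_comm]

section DyadicSum

variable {g : ℝ → ℝ} {C : ℝ}

theorem le_two_mul_two_zpow_neg_abs_add (hg₀ : ∀ t, 0 ≤ g t)
    (hg : ∀ t ≠ 0, g t ≤ C * min |t| |t|⁻¹) {ξ : ℝ} {n : ℤ}
    (hn : |ξ| ∈ Ico ((2 : ℝ) ^ n) (2 ^ (n + 1))) (j : ℤ) :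
    g (2 ^ j * ξ) ≤ 2 * C * 2 ^ (-|j + n|) := by
  have hC : 0 ≤ C := by simpa using (hg₀ 1).trans (hg 1 one_ne_zero)
  have h2j : (0 : ℝ) < 2 ^ j := by positivity
  have hξ : ξ ≠ 0 := abs_pos.mp (lt_of_lt_of_le (by positivity) hn.1)
  have hdil : |2 ^ j * ξ| ∈ Ico ((2 : ℝ) ^ (j + n)) (2 ^ (j + n + 1)) := by
    rw [abs_mul, abs_of_pos h2j, add_assoc, zpow_add₀ two_ne_zero, zpow_add₀ two_ne_zero]
    exact ⟨by gcongr; exact hn.1, by gcongr; exact hn.2⟩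
  calc g (2 ^ j * ξ) ≤ C * min |2 ^ j * ξ| |2 ^ j * ξ|⁻¹ := hg _ (mul_ne_zero h2j.ne' hξ)
    _ ≤ C * (2 * 2 ^ (-|j + n|)) := by gcongr; exact min_self_inv_le_of_mem_Ico_zpow hdil
    _ = 2 * C * 2 ^ (-|j + n|) := by ring

theorem summable_comp_two_zpow_mul_and_tsum_le (hg₀ : ∀ t, 0 ≤ g t)
    (hg : ∀ t ≠ 0, g t ≤ C * min |t| |t|⁻¹) {ξ : ℝ} (hξ : ξ ≠ 0) :
    Summable (fun j : ℤ => g (2 ^ j * ξ)) ∧ ∑' j : ℤ, g (2 ^ j * ξ) ≤ 6 * C := by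
  obtain ⟨n, hn⟩ := exists_mem_Ico_zpow (abs_pos.mpr hξ) (one_lt_two (α := ℝ))
  have hmajorant := (hasSum_two_zpow_neg_abs_add n).mul_left (2 * C)
  have hbound := le_two_mul_two_zpow_neg_abs_add hg₀ hg hn
  have hsum : Summable (fun j : ℤ => g (2 ^ j * ξ)) :=
    hmajorant.summable.of_nonneg_of_le (fun j => hg₀ _) hbound
  refine ⟨hsum, ?_⟩
  calc ∑' j : ℤ, g (2 ^ j * ξ) ≤ 2 * C * 3 := hasSum_le hbound hsum.hasSum hmajorant
    _ = 6 * C := by ring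

end DyadicSum

theorem exists_two_zpow_mul_eq_mul_or_neg {ξ ξ₀ : ℝ} (hξ : ξ ≠ 0) (hξ₀ : ξ₀ ≠ 0) :
    ∃ j : ℤ, ∃ a ∈ Icc (1 : ℝ) 2, 2 ^ j * ξ = a * ξ₀ ∨ 2 ^ j * ξ = -(a * ξ₀) := by
  obtain ⟨n, hn⟩ := exists_mem_Ico_zpow (x := |ξ| / |ξ₀|) (by positivity) one_lt_two
  have h2n : (0 : ℝ) < 2 ^ n := by positivity
  refine ⟨-n, |ξ| / |ξ₀| / 2 ^ n, ⟨?_, ?_⟩, abs_eq_abs.mp ?_⟩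
  · rw [le_div_iff₀ h2n, one_mul]; exact hn.1
  · rw [div_le_iff₀ h2n, ← zpow_one_add₀ two_ne_zero, add_comm]; exact hn.2.le
  · have : (0 : ℝ) ≤ |ξ| / |ξ₀| / 2 ^ n := by positivity
    rw [abs_mul, abs_mul, abs_of_pos (zpow_pos two_pos _), abs_of_nonneg this, zpow_neg]
    field_simp

theorem stmt_15_general
    (ψhat : ℝ → ℂ)
    (ξ₀ : ℝ) (hξ₀ : ξ₀ ≠ 0)
    (hinf₁ : 0 < ⨅ a : Set.Icc (1 : ℝ) 2, ‖ψhat ((a : ℝ) * ξ₀)‖)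
    (hinf₂ : 0 < ⨅ a : Set.Icc (1 : ℝ) 2, ‖ψhat (-((a : ℝ) * ξ₀))‖)
    (C : ℝ) (hC : 0 < C)
    (hdecay : ∀ ξ : ℝ, ‖ψhat ξ‖ ^ 2 ≤ C * |ξ| / (1 + |ξ|) ^ 2) :
    ∃ A B : ℝ, 0 < A ∧ A ≤ B ∧
      ∀ ξ : ℝ, ξ ≠ 0 →
        A ≤ (∑' j : ℤ, ‖ψhat ((2 : ℝ) ^ j * ξ)‖ ^ 2) ∧
        (∑' j : ℤ, ‖ψhat ((2 : ℝ) ^ j * ξ)‖ ^ 2) ≤ B := by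
  set c := min (⨅ a : Icc (1 : ℝ) 2, ‖ψhat (a * ξ₀)‖)
    (⨅ a : Icc (1 : ℝ) 2, ‖ψhat (-(a * ξ₀))‖)
  have hc : 0 < c := lt_min hinf₁ hinf₂
  have hg : ∀ t ≠ 0, ‖ψhat t‖ ^ 2 ≤ C * min |t| |t|⁻¹ := fun t _ =>
    (hdecay t).trans <| by
      rw [mul_div_assoc]
      exact mul_le_mul_of_nonneg_left (div_one_add_sq_le_min (abs_nonneg t)) hC.le
  refine ⟨c ^ 2, c ^ 2 + 6 * C, by positivity, by linarith, fun ξ hξ => ?_⟩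
  obtain ⟨hsum, hupper⟩ :=
    summable_comp_two_zpow_mul_and_tsum_le (fun t => by positivity) hg hξ
  refine ⟨?_, hupper.trans (by linarith [sq_nonneg c])⟩
  obtain ⟨j, a, ha, hj⟩ := exists_two_zpow_mul_eq_mul_or_neg hξ hξ₀
  have hbdd {f : Icc (1 : ℝ) 2 → ℝ} (hf : ∀ a, 0 ≤ f a) : BddBelow (range f) :=
    ⟨0, forall_mem_range.mpr hf⟩
  have hterm : c ≤ ‖ψhat (2 ^ j * ξ)‖ := by
    rcases hj with hj | hj <;> rw [hj]
    · exact (min_le_left _ _).trans (ciInf_le (hbdd fun _ => norm_nonneg _) ⟨a, ha⟩)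
    · exact (min_le_right _ _).trans (ciInf_le (hbdd fun _ => norm_nonneg _) ⟨a, ha⟩)
  calc c ^ 2 ≤ ‖ψhat (2 ^ j * ξ)‖ ^ 2 := by gcongr
    _ ≤ ∑' j : ℤ, ‖ψhat (2 ^ j * ξ)‖ ^ 2 := hsum.le_tsum j fun _ _ => by positivity

/-- Let `ψ ∈ L²(ℝ)` with continuous (representative of its)
Fourier–Plancherel transform `ψhat` (here `F` is the Plancherel transform on `L²(ℝ)`,
agreeing with `𝓕` on `L¹ ∩ L²`). Assume
(i) there is `ξ₀ ≠ 0` with `inf_{a∈[1,2]} |ψhat (a ξ₀)| > 0` and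
`inf_{a∈[1,2]} |ψhat (-a ξ₀)| > 0`, and
(ii) there is `C > 0` with `|ψhat ξ|² ≤ C |ξ| / (1+|ξ|)²` for all `ξ`.
Then there are `0 < A ≤ B` with `A ≤ ∑_{j∈ℤ} |ψhat (2^j ξ)|² ≤ B` for every `ξ ≠ 0`;
i.e. the symbol of the semi-discrete dyadic wavelet system is bounded above and below. -/
theorem stmt_15
    (F : Lp ℂ 2 (volume : Measure ℝ) ≃ₗᵢ[ℂ] Lp ℂ 2 (volume : Measure ℝ))
    (hF : ∀ (f : ℝ → ℂ) (hf1 : Integrable f volume) (hf2 : MemLp f 2 volume),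
        (F (hf2.toLp f) : ℝ → ℂ) =ᵐ[volume] 𝓕 f)
    (ψ : ℝ → ℂ) (hψ : MemLp ψ 2 volume)
    (ψhat : ℝ → ℂ)
    (hψhat : (F (hψ.toLp ψ) : ℝ → ℂ) =ᵐ[volume] ψhat)
    (hcont : Continuous ψhat)
    (ξ₀ : ℝ) (hξ₀ : ξ₀ ≠ 0)
    (hinf₁ : 0 < ⨅ a : Set.Icc (1 : ℝ) 2, ‖ψhat ((a : ℝ) * ξ₀)‖)
    (hinf₂ : 0 < ⨅ a : Set.Icc (1 : ℝ) 2, ‖ψhat (-((a : ℝ) * ξ₀))‖)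
    (C : ℝ) (hC : 0 < C)
    (hdecay : ∀ ξ : ℝ, ‖ψhat ξ‖ ^ 2 ≤ C * |ξ| / (1 + |ξ|) ^ 2) :
    ∃ A B : ℝ, 0 < A ∧ A ≤ B ∧
      ∀ ξ : ℝ, ξ ≠ 0 →
        A ≤ (∑' j : ℤ, ‖ψhat ((2 : ℝ) ^ j * ξ)‖ ^ 2) ∧
        (∑' j : ℤ, ‖ψhat ((2 : ℝ) ^ j * ξ)‖ ^ 2) ≤ B :=
  stmt_15_general ψhat ξ₀ hξ₀ hinf₁ hinf₂ C hC hdecay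
end

section
/- Let β(ω) = (1+|ω|)^{-1} for ω ∈ ℝ, and let u : ℝ → ℝ be given by u(z) = (1−z)(1+z) for |z| ≤ 1 and u(z) = 0 for |z| > 1. Then for every ξ ∈ ℝ: ∫_ℝ u(β(ω)(ξ−ω)) β(ω) dω = 3 − ξ² if |ξ| ≤ 1, and = 2 if |ξ| > 1. (This computes the symbol m_{Ψ,Φ}(ξ) = ∫_ℝ conj(ψ̂(β(ω)(ξ−ω))) φ̂(β(ω)(ξ−ω)) β(ω) dω for the windows ψ̂(z) = (1−z)·χ_{[−1,1]}(z) and φ̂(z) = (1+z)·χ_{[−1,1]}(z); in particular 2 ≤ m_{Ψ,Φ}(ξ) ≤ 3 for all ξ, so these windows generate a reproducing pair for the affine Weyl–Heisenberg system with η(ω) = ω, β(ω) = (1+|ω|)^{-1}, s = 1.) -/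
open MeasureTheory

/-- The scale function `β(ω) = (1+|ω|)⁻¹`. -/
noncomputable def betaFn (ω : ℝ) : ℝ := (1 + |ω|)⁻¹

/-- `u(z) = (1-z)(1+z)` for `|z| ≤ 1` and `u(z) = 0` otherwise, i.e.
`u = conj(ψ̂) · φ̂` for the windows `ψ̂(z) = (1-z) χ_{[-1,1]}(z)`,
`φ̂(z) = (1+z) χ_{[-1,1]}(z)`. -/
noncomputable def uFn (z : ℝ) : ℝ := if |z| ≤ 1 then (1 - z) * (1 + z) else 0

/-!
The substitution `ω ↦ -ω` maps the integrand at `ξ` to the integrand at `-ξ`, so the integral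
over `ℝ` is `J(ξ) + J(-ξ)`, where `J` is the integral over `ω > 0`. There `β(ω) = 1/t` with
`t = 1 + ω`, and for `c = 1 + ξ` the integrand is `2c/t² - c²/t³` on `t ≥ max(1, c/2)` and vanishes
elsewhere (identically if `c ≤ 0`). The primitive `-2c/t + c²/(2t²)` gives `J(ξ) = 0` for
`ξ ≤ -1`, `J(ξ) = (1 + ξ)(3 - ξ)/2` for `|ξ| ≤ 1` and `J(ξ) = 2` for `ξ > 1`.
-/

open Set Filter Topology

theorem integral_eq_integral_Ioi_add_integral_Ioi_comp_neg {E : Type*} [NormedAddCommGroup E]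
    [NormedSpace ℝ E] {f : ℝ → E} (hf : IntegrableOn f (Ioi 0))
    (hf_neg : IntegrableOn (fun x ↦ f (-x)) (Ioi 0)) :
    ∫ x, f x = (∫ x in Ioi 0, f x) + ∫ x in Ioi 0, f (-x) := by
  have hf_Iic : IntegrableOn f (Iic 0) := by
    have h : IntegrableOn (fun x ↦ f (-x)) (Ici (-0)) := by
      rw [neg_zero]
      exact (integrableOn_Ici_iff_integrableOn_Ioi enorm_ne_top).mpr hf_neg
    simpa only [neg_neg] using h.comp_neg_Iic
  rw [← intervalIntegral.integral_Iic_add_Ioi hf_Iic hf, add_comm, integral_comp_neg_Ioi,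
    neg_zero]

lemma betaFn_pos (ω : ℝ) : 0 < betaFn ω := by
  unfold betaFn
  positivity

lemma betaFn_neg (ω : ℝ) : betaFn (-ω) = betaFn ω := by
  rw [betaFn, betaFn, abs_neg]

lemma uFn_nonneg (z : ℝ) : 0 ≤ uFn z := by
  unfold uFn
  split_ifs with h
  · obtain ⟨h₁, h₂⟩ := abs_le.mp h
    nlinarith
  · exact le_rfl

lemma uFn_neg (z : ℝ) : uFn (-z) = uFn z := by
  unfold uFn
  rw [abs_neg]
  split_ifs <;> ring

lemma uFn_eq_zero_of_one_le_abs {z : ℝ} (h : 1 ≤ |z|) : uFn z = 0 := by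
  unfold uFn
  split_ifs with h'
  · rcases abs_eq zero_le_one |>.mp (le_antisymm h' h) with rfl | rfl <;> ring
  · rfl

noncomputable def symbolIntegrand (ξ ω : ℝ) : ℝ := uFn (betaFn ω * (ξ - ω)) * betaFn ω

lemma symbolIntegrand_nonneg (ξ ω : ℝ) : 0 ≤ symbolIntegrand ξ ω :=
  mul_nonneg (uFn_nonneg _) (betaFn_pos ω).le

lemma symbolIntegrand_neg (ξ : ℝ) : symbolIntegrand (-ξ) = fun ω ↦ symbolIntegrand ξ (-ω) := by
  funext ω
  rw [symbolIntegrand, symbolIntegrand, betaFn_neg, ← uFn_neg]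
  ring_nf

lemma symbolIntegrand_eq_zero {ξ ω : ℝ} (h : 1 + |ω| ≤ |ξ - ω|) : symbolIntegrand ξ ω = 0 := by
  have hpos : 0 < 1 + |ω| := by positivity
  have hz : 1 ≤ |betaFn ω * (ξ - ω)| := by
    rw [betaFn, abs_mul, abs_inv, abs_of_pos hpos, inv_mul_eq_div, le_div_iff₀ hpos, one_mul]
    exact h
  rw [symbolIntegrand, uFn_eq_zero_of_one_le_abs hz, zero_mul]

lemma symbolIntegrand_of_nonneg {ξ ω : ℝ} (hω : 0 ≤ ω) (h : |ξ - ω| ≤ 1 + ω) :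
    symbolIntegrand ξ ω = 2 * (1 + ξ) / (1 + ω) ^ 2 - (1 + ξ) ^ 2 / (1 + ω) ^ 3 := by
  have hpos : 0 < 1 + ω := by linarith
  have hz : |betaFn ω * (ξ - ω)| ≤ 1 := by
    rw [betaFn, abs_of_nonneg hω, abs_mul, abs_inv, abs_of_pos hpos, inv_mul_eq_div,
      div_le_one hpos]
    exact h
  rw [symbolIntegrand, uFn, if_pos hz, betaFn, abs_of_nonneg hω]
  field_simp
  ring

/-- With `c = 1 + ξ`, a primitive in `ω` of the formula in `symbolIntegrand_of_nonneg`. -/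
noncomputable def symbolPrimitive (c ω : ℝ) : ℝ := -2 * c * (1 + ω)⁻¹ + c ^ 2 / 2 * ((1 + ω)⁻¹) ^ 2

lemma hasDerivAt_symbolPrimitive (c : ℝ) {ω : ℝ} (hω : 0 < 1 + ω) :
    HasDerivAt (symbolPrimitive c) (2 * c / (1 + ω) ^ 2 - c ^ 2 / (1 + ω) ^ 3) ω := by
  have hinv : HasDerivAt (fun ω : ℝ ↦ (1 + ω)⁻¹) (-1 / (1 + ω) ^ 2) ω :=
    ((hasDerivAt_id ω).const_add 1).fun_inv hω.ne'
  refine ((hinv.const_mul (-2 * c)).add ((hinv.pow 2).const_mul (c ^ 2 / 2))).congr_deriv ?_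
  have := hω.ne'
  simp only [Nat.cast_ofNat, Nat.add_one_sub_one, pow_one]
  field_simp
  ring

lemma tendsto_symbolPrimitive_atTop (c : ℝ) : Tendsto (symbolPrimitive c) atTop (𝓝 0) := by
  have h : Tendsto (fun ω : ℝ ↦ (1 + ω)⁻¹) atTop (𝓝 0) :=
    tendsto_inv_atTop_zero.comp (tendsto_atTop_add_const_left _ 1 tendsto_id)
  unfold symbolPrimitive
  simpa using (h.const_mul (-2 * c)).add ((h.pow 2).const_mul (c ^ 2 / 2))

lemma integrableOn_symbolIntegrand_Ioi_and_integral_eq {ξ a : ℝ} (hξ : -1 ≤ ξ) (ha₀ : 0 ≤ a)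
    (ha : ξ - 1 ≤ 2 * a) :
    IntegrableOn (symbolIntegrand ξ) (Ioi a) ∧
      ∫ ω in Ioi a, symbolIntegrand ξ ω = -symbolPrimitive (1 + ξ) a := by
  have hderiv : ∀ ω ∈ Ioi a, HasDerivAt (symbolPrimitive (1 + ξ)) (symbolIntegrand ξ ω) ω := by
    intro ω (hω : a < ω)
    rw [symbolIntegrand_of_nonneg (by linarith) (abs_le.mpr ⟨by linarith, by linarith⟩)]
    exact hasDerivAt_symbolPrimitive _ (by linarith)
  have hcont : ContinuousWithinAt (symbolPrimitive (1 + ξ)) (Ici a) a :=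
    (hasDerivAt_symbolPrimitive _ (by linarith)).continuousAt.continuousWithinAt
  have hnonneg : ∀ ω ∈ Ioi a, 0 ≤ symbolIntegrand ξ ω := fun ω _ ↦ symbolIntegrand_nonneg ξ ω
  have hlim := tendsto_symbolPrimitive_atTop (1 + ξ)
  refine ⟨integrableOn_Ioi_deriv_of_nonneg hcont hderiv hnonneg hlim, ?_⟩
  rw [integral_Ioi_of_hasDerivAt_of_nonneg hcont hderiv hnonneg hlim, zero_sub]

noncomputable def halfSymbol (ξ : ℝ) : ℝ :=
  if ξ ≤ -1 then 0 else if ξ ≤ 1 then (1 + ξ) * (3 - ξ) / 2 else 2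

lemma integrableOn_symbolIntegrand_Ioi_zero_and_integral_eq (ξ : ℝ) :
    IntegrableOn (symbolIntegrand ξ) (Ioi 0) ∧
      ∫ ω in Ioi 0, symbolIntegrand ξ ω = halfSymbol ξ := by
  rcases le_or_gt ξ (-1) with hξ | hξ
  · have hzero : EqOn (symbolIntegrand ξ) 0 (Ioi 0) := fun ω (hω : 0 < ω) ↦
      symbolIntegrand_eq_zero (by rw [abs_of_pos hω, abs_of_neg (by linarith)]; linarith)
    rw [halfSymbol, if_pos hξ, setIntegral_congr_fun measurableSet_Ioi hzero]
    exact ⟨integrableOn_zero.congr_fun hzero.symm measurableSet_Ioi, integral_zero _ _⟩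
  rcases le_or_gt ξ 1 with hξ' | hξ'
  · obtain ⟨hint, hval⟩ := integrableOn_symbolIntegrand_Ioi_and_integral_eq hξ.le le_rfl
      (by linarith)
    refine ⟨hint, ?_⟩
    rw [hval, halfSymbol, if_neg (not_le.mpr hξ), if_pos hξ', symbolPrimitive]
    ring
  · -- the integrand vanishes for `0 < ω ≤ a`, where `a = (ξ - 1)/2` solves `|ξ - a| = 1 + a`
    set a := (ξ - 1) / 2 with ha
    obtain ⟨hint, hval⟩ := integrableOn_symbolIntegrand_Ioi_and_integral_eq hξ.le
      (by linarith) (by linarith)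
    have hzero : ∀ ω ∈ Ioi 0 \ Ioi a, symbolIntegrand ξ ω = 0 := by
      rintro ω ⟨hω₀ : 0 < ω, hωa⟩
      rw [mem_Ioi, not_lt] at hωa
      exact symbolIntegrand_eq_zero (by rw [abs_of_pos hω₀, abs_of_pos (by linarith)]; linarith)
    refine ⟨hint.of_forall_sdiff_eq_zero measurableSet_Ioi hzero, ?_⟩
    rw [setIntegral_eq_of_subset_of_forall_sdiff_eq_zero measurableSet_Ioi
      (Ioi_subset_Ioi (by linarith)) hzero, hval, halfSymbol, if_neg (not_le.mpr hξ),
      if_neg (not_le.mpr hξ'), symbolPrimitive]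
    have : 1 + a ≠ 0 := by linarith
    field_simp
    ring

lemma halfSymbol_add_halfSymbol_neg (ξ : ℝ) :
    halfSymbol ξ + halfSymbol (-ξ) = if |ξ| ≤ 1 then 3 - ξ ^ 2 else 2 := by
  rcases le_or_gt |ξ| 1 with h | h
  · obtain ⟨h₁, h₂⟩ := abs_le.mp h
    simp only [halfSymbol, if_pos h]
    split_ifs <;> nlinarith
  · simp only [halfSymbol, if_neg h.not_ge]
    rcases lt_abs.mp h with h | h <;> split_ifs <;> linarith

/-- For `β(ω) = (1+|ω|)⁻¹` and `u(z) = (1-z)(1+z) χ_{[-1,1]}(z)`: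
`∫_ℝ u(β(ω)(ξ-ω)) β(ω) dω = 3 - ξ²` if `|ξ| ≤ 1` and `= 2` if `|ξ| > 1`.
This computes the symbol `m_{Ψ,Φ}` of the affine Weyl–Heisenberg system with
`η(ω) = ω`, `β(ω) = (1+|ω|)⁻¹`, `s = 1` and windows `ψ̂(z) = (1-z)χ_{[-1,1]}(z)`,
`φ̂(z) = (1+z)χ_{[-1,1]}(z)`; in particular `2 ≤ m_{Ψ,Φ} ≤ 3`, so these windows
generate a reproducing pair. -/
theorem stmt_17 :
    ∀ ξ : ℝ,
      (∫ ω : ℝ, uFn (betaFn ω * (ξ - ω)) * betaFn ω)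
        = if |ξ| ≤ 1 then 3 - ξ ^ 2 else 2 := by
  intro ξ
  obtain ⟨hint, hval⟩ := integrableOn_symbolIntegrand_Ioi_zero_and_integral_eq ξ
  obtain ⟨hint_neg, hval_neg⟩ := integrableOn_symbolIntegrand_Ioi_zero_and_integral_eq (-ξ)
  simp only [symbolIntegrand_neg] at hint_neg hval_neg
  change ∫ ω, symbolIntegrand ξ ω = _
  rw [integral_eq_integral_Ioi_add_integral_Ioi_comp_neg hint hint_neg, hval, hval_neg,
    halfSymbol_add_halfSymbol_neg]
end

section
/- Let β(ω) = (1+|ω|)^{-1} and let ψ ∈ L²(ℝ) have Fourier transform ψ̂(z) = (1+z)·χ_{[−1,1]}(z). Then for every f ∈ L²(ℝ) with |f̂(ξ)| ≥ 1 for a.e. ξ ∈ [−1,1], the double integral ∫_ℝ ∫_ℝ |f̂(ξ)|² |ψ̂(β(ω)(ξ−ω))|² β(ω) dξ dω = +∞. In particular, the exist f ∈ L¹(ℝ)∩L²(ℝ) whose analysis transform V_ψ f(x,ω) = ⟨f, M_ω T_x D_{β(ω)} ψ⟩ does not lie in L²(ℝ², dx dω), so the system Ψ(x,ω) = M_ω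 T_x D_{β(ω)}ψ is not Bessel even though it belongs to a reproducing pair. -/
/-! For `ω ≤ -1` and `ξ ∈ [-1, 1]` the window argument `β(ω)(ξ - ω)` lies in `[0, 1]`, where
`|ψ̂| ≥ 1`. Hence the inner integral is at least `β(ω) = (1 - ω)⁻¹`, which is not integrable on
`(-∞, -1]`. A witness in `L¹ ∩ L²` is `e^π e^{-πx²}`: the Gaussian is its own Fourier transform,
and the factor `e^π` makes it at least `1` on `[-1, 1]`. -/

open MeasureTheory ComplexConjugate
open scoped InnerProductSpace FourierTransform ENNReal

/-- The window `ψ̂(z) = (1+z) χ_{[-1,1]}(z)`. -/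
noncomputable def psiHatFn (z : ℝ) : ℂ := if |z| ≤ 1 then ((1 + z : ℝ) : ℂ) else 0

open Set

theorem lintegral_Ici_ofReal_inv_eq_top {a : ℝ} (ha : 0 < a) :
    ∫⁻ x in Ici a, ENNReal.ofReal x⁻¹ = ∞ := by
  by_contra h
  have hpos : 0 ≤ᵐ[volume.restrict (Ici a)] fun x : ℝ => x⁻¹ :=
    (ae_restrict_iff' measurableSet_Ici).2 <| .of_forall fun x hx =>
      inv_nonneg.2 (ha.le.trans hx)
  exact not_integrableOn_Ici_inv <|
    (lintegral_ofReal_ne_top_iff_integrable measurable_inv.aestronglyMeasurable hpos).1 h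

theorem lintegral_Iic_ofReal_inv_one_add_abs_eq_top :
    ∫⁻ ω in Iic (-1), ENNReal.ofReal (1 + |ω|)⁻¹ = ∞ := by
  have hsub : (fun ω : ℝ => 1 - ω) ⁻¹' Ici 2 = Iic (-1) := by
    rw [preimage_const_sub_Ici]; norm_num
  calc ∫⁻ ω in Iic (-1), ENNReal.ofReal (1 + |ω|)⁻¹
      = ∫⁻ ω in Iic (-1), ENNReal.ofReal (1 - ω)⁻¹ := by
        refine setLIntegral_congr_fun measurableSet_Iic fun ω hω => ?_
        rw [abs_of_nonpos (hω.trans (by norm_num)), sub_eq_add_neg]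
    _ = ∫⁻ x in Ici 2, ENNReal.ofReal x⁻¹ := by
        rw [← hsub]
        exact (volume.measurePreserving_sub_left 1).setLIntegral_comp_preimage measurableSet_Ici
          measurable_inv.ennreal_ofReal
    _ = ∞ := lintegral_Ici_ofReal_inv_eq_top two_pos

theorem one_le_norm_psiHatFn {z : ℝ} (hz : z ∈ Icc 0 1) : 1 ≤ ‖psiHatFn z‖ := by
  obtain ⟨hz0, hz1⟩ := hz
  rw [psiHatFn, if_pos (abs_le.2 ⟨by linarith, hz1⟩), Complex.norm_real, Real.norm_eq_abs,
    abs_of_nonneg (by linarith)]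
  linarith

theorem inv_one_add_abs_mul_sub_mem_Icc {ω ξ : ℝ} (hω : ω ≤ 0) (hξ : ξ ∈ Icc ω 1) :
    (1 + |ω|)⁻¹ * (ξ - ω) ∈ Icc 0 1 := by
  have hden : 0 < 1 - ω := by linarith
  rw [abs_of_nonpos hω, ← sub_eq_add_neg]
  exact ⟨mul_nonneg (inv_nonneg.2 hden.le) (by linarith [hξ.1]),
    (inv_mul_le_one₀ hden).2 (by linarith [hξ.2])⟩

theorem ofReal_inv_one_add_abs_le_lintegral {fhat : ℝ → ℂ}
    (hfhat : ∀ᵐ ξ ∂(volume : Measure ℝ), ξ ∈ Icc (-1 : ℝ) 1 → 1 ≤ ‖fhat ξ‖)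
    {ω : ℝ} (hω : ω ≤ -1) :
    ENNReal.ofReal (1 + |ω|)⁻¹ ≤ ∫⁻ ξ, ENNReal.ofReal
      (‖fhat ξ‖ ^ 2 * ‖psiHatFn ((1 + |ω|)⁻¹ * (ξ - ω))‖ ^ 2 * (1 + |ω|)⁻¹) := by
  calc ENNReal.ofReal (1 + |ω|)⁻¹
      ≤ ENNReal.ofReal (1 + |ω|)⁻¹ * volume (Icc (-1 : ℝ) 1) :=
        le_mul_of_one_le_right' (by rw [Real.volume_Icc]; norm_num)
    _ = ∫⁻ _ in Icc (-1 : ℝ) 1, ENNReal.ofReal (1 + |ω|)⁻¹ := (setLIntegral_const _ _).symm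
    _ ≤ ∫⁻ ξ in Icc (-1 : ℝ) 1, ENNReal.ofReal
          (‖fhat ξ‖ ^ 2 * ‖psiHatFn ((1 + |ω|)⁻¹ * (ξ - ω))‖ ^ 2 * (1 + |ω|)⁻¹) := by
        refine setLIntegral_mono_ae' measurableSet_Icc ?_
        filter_upwards [hfhat] with ξ hf hξ
        have hψ := one_le_norm_psiHatFn
          (inv_one_add_abs_mul_sub_mem_Icc (hω.trans (by norm_num)) ⟨by linarith [hξ.1], hξ.2⟩)
        exact ENNReal.ofReal_le_ofReal <| le_mul_of_one_le_left (by positivity) <|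
          one_le_mul_of_one_le_of_one_le (one_le_pow₀ (hf hξ)) (one_le_pow₀ hψ)
    _ ≤ _ := setLIntegral_le_lintegral _ _

theorem lintegral_lintegral_psiHatFn_eq_top {fhat : ℝ → ℂ}
    (hfhat : ∀ᵐ ξ ∂(volume : Measure ℝ), ξ ∈ Icc (-1 : ℝ) 1 → 1 ≤ ‖fhat ξ‖) :
    ∫⁻ ω, ∫⁻ ξ, ENNReal.ofReal
      (‖fhat ξ‖ ^ 2 * ‖psiHatFn ((1 + |ω|)⁻¹ * (ξ - ω))‖ ^ 2 * (1 + |ω|)⁻¹) = ∞ := by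
  refine eq_top_mono ?_ lintegral_Iic_ofReal_inv_one_add_abs_eq_top
  calc ∫⁻ ω in Iic (-1), ENNReal.ofReal (1 + |ω|)⁻¹
      ≤ ∫⁻ ω in Iic (-1), ∫⁻ ξ, ENNReal.ofReal
          (‖fhat ξ‖ ^ 2 * ‖psiHatFn ((1 + |ω|)⁻¹ * (ξ - ω))‖ ^ 2 * (1 + |ω|)⁻¹) :=
        setLIntegral_mono' measurableSet_Iic fun ω hω =>
          ofReal_inv_one_add_abs_le_lintegral hfhat hω
    _ ≤ _ := setLIntegral_le_lintegral _ _

theorem fourier_const_smul {V E : Type*} [NormedAddCommGroup V] [InnerProductSpace ℝ V]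
    [MeasurableSpace V] [BorelSpace V] [FiniteDimensional ℝ V] [NormedAddCommGroup E]
    [NormedSpace ℂ E] (c : ℂ) (f : V → E) : 𝓕 (c • f) = c • 𝓕 f :=
  VectorFourier.fourierIntegral_const_smul _ _ _ _ _

section Gaussian

open Real

theorem integrable_cexp_neg_pi_mul_sq : Integrable fun x : ℝ => Complex.exp (-π * x ^ 2) := by
  simpa using integrable_cexp_neg_mul_sq (b := (π : ℂ)) (by simp [pi_pos])

theorem norm_cexp_neg_pi_mul_sq (x : ℝ) : ‖Complex.exp (-π * x ^ 2)‖ = rexp (-π * x ^ 2) := by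
  rw [Complex.norm_exp]
  norm_cast

theorem memLp_two_cexp_neg_pi_mul_sq : MemLp (fun x : ℝ => Complex.exp (-π * x ^ 2)) 2 := by
  rw [memLp_two_iff_integrable_sq_norm integrable_cexp_neg_pi_mul_sq.aestronglyMeasurable]
  refine (integrable_exp_neg_mul_sq (mul_pos two_pos pi_pos)).congr (.of_forall fun x => ?_)
  dsimp only
  rw [norm_cexp_neg_pi_mul_sq, ← exp_nat_mul]
  ring_nf

theorem fourier_cexp_neg_pi_mul_sq :
    𝓕 (fun x : ℝ => Complex.exp (-π * x ^ 2)) = fun x : ℝ => Complex.exp (-π * x ^ 2) := by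
  simpa using fourier_gaussian_pi (b := 1) (by norm_num)

theorem exists_fourier_eq_self_one_le_norm_on_Icc :
    ∃ f : ℝ → ℂ, Integrable f ∧ MemLp f 2 ∧ 𝓕 f = f ∧ ∀ ξ ∈ Icc (-1 : ℝ) 1, 1 ≤ ‖f ξ‖ := by
  refine ⟨(rexp π : ℂ) • fun x : ℝ => Complex.exp (-π * x ^ 2),
    integrable_cexp_neg_pi_mul_sq.smul _, memLp_two_cexp_neg_pi_mul_sq.const_smul _,
    by rw [fourier_const_smul, fourier_cexp_neg_pi_mul_sq], fun ξ hξ => ?_⟩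
  rw [Pi.smul_apply, norm_smul, Complex.norm_real, norm_of_nonneg (exp_pos π).le,
    norm_cexp_neg_pi_mul_sq, ← exp_add]
  refine one_le_exp ?_
  nlinarith [pi_pos, mul_nonneg (neg_le_iff_add_nonneg.1 hξ.1) (sub_nonneg.2 hξ.2)]

end Gaussian

theorem stmt_19_general
    (F : Lp ℂ 2 (volume : Measure ℝ) ≃ₗᵢ[ℂ] Lp ℂ 2 (volume : Measure ℝ))
    (hF : ∀ (f : ℝ → ℂ) (hf1 : Integrable f volume) (hf2 : MemLp f 2 volume),
        (F (hf2.toLp f) : ℝ → ℂ) =ᵐ[volume] 𝓕 f) :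
    (∀ (f : ℝ → ℂ) (hf : MemLp f 2 volume) (fhat : ℝ → ℂ),
      (F (hf.toLp f) : ℝ → ℂ) =ᵐ[volume] fhat →
      (∀ᵐ ξ ∂(volume : Measure ℝ), ξ ∈ Set.Icc (-1 : ℝ) 1 → 1 ≤ ‖fhat ξ‖) →
      (∫⁻ ω : ℝ, ∫⁻ ξ : ℝ, ENNReal.ofReal
          (‖fhat ξ‖ ^ 2 * ‖psiHatFn ((1 + |ω|)⁻¹ * (ξ - ω))‖ ^ 2 * (1 + |ω|)⁻¹)) = ⊤) ∧
    (∃ (f : ℝ → ℂ) (hf1 : Integrable f volume) (hf : MemLp f 2 volume) (fhat : ℝ → ℂ),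
      (F (hf.toLp f) : ℝ → ℂ) =ᵐ[volume] fhat ∧
      (∫⁻ ω : ℝ, ∫⁻ ξ : ℝ, ENNReal.ofReal
          (‖fhat ξ‖ ^ 2 * ‖psiHatFn ((1 + |ω|)⁻¹ * (ξ - ω))‖ ^ 2 * (1 + |ω|)⁻¹)) = ⊤) := by
  refine ⟨fun f _ fhat _ hfhat => lintegral_lintegral_psiHatFn_eq_top hfhat, ?_⟩
  obtain ⟨f, hf1, hf2, hff, hlb⟩ := exists_fourier_eq_self_one_le_norm_on_Icc
  exact ⟨f, hf1, hf2, f, (hF f hf1 hf2).trans (.of_eq hff), lintegral_lintegral_psiHatFn_eq_top (.of_forall hlb)⟩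

/-- Let `β(ω) = (1+|ω|)⁻¹` and let `ψ ∈ L²(ℝ)` have
Fourier–Plancherel transform `ψ̂(z) = (1+z) χ_{[-1,1]}(z)` (here `F` is the Plancherel
transform on `L²(ℝ)`). Then for every `f ∈ L²(ℝ)` whose transform `fhat` satisfies
`|fhat ξ| ≥ 1` for a.e. `ξ ∈ [-1,1]`, the double integral
`∫_ℝ ∫_ℝ |fhat ξ|² |ψ̂(β(ω)(ξ-ω))|² β(ω) dξ dω = +∞` — which by Plancherel equals
`∬ |V_ψ f(x,ω)|² dx dω`, so `V_ψ f ∉ L²(ℝ², dx dω)`. In particular there exists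
`f ∈ L¹(ℝ) ∩ L²(ℝ)` whose analysis transform is not square-integrable: the system
`Ψ(x,ω) = M_ω T_x D_{β(ω)} ψ` is not Bessel, although it belongs to a reproducing
pair. -/
theorem stmt_19
    (F : Lp ℂ 2 (volume : Measure ℝ) ≃ₗᵢ[ℂ] Lp ℂ 2 (volume : Measure ℝ))
    (hF : ∀ (f : ℝ → ℂ) (hf1 : Integrable f volume) (hf2 : MemLp f 2 volume),
        (F (hf2.toLp f) : ℝ → ℂ) =ᵐ[volume] 𝓕 f)
    (ψ : ℝ → ℂ) (hψ : MemLp ψ 2 volume)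
    (hψhat : (F (hψ.toLp ψ) : ℝ → ℂ) =ᵐ[volume] psiHatFn) :
    (∀ (f : ℝ → ℂ) (hf : MemLp f 2 volume) (fhat : ℝ → ℂ),
      (F (hf.toLp f) : ℝ → ℂ) =ᵐ[volume] fhat →
      (∀ᵐ ξ ∂(volume : Measure ℝ), ξ ∈ Set.Icc (-1 : ℝ) 1 → 1 ≤ ‖fhat ξ‖) →
      (∫⁻ ω : ℝ, ∫⁻ ξ : ℝ, ENNReal.ofReal
          (‖fhat ξ‖ ^ 2 * ‖psiHatFn ((1 + |ω|)⁻¹ * (ξ - ω))‖ ^ 2 * (1 + |ω|)⁻¹)) = ⊤) ∧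
    (∃ (f : ℝ → ℂ) (hf1 : Integrable f volume) (hf : MemLp f 2 volume) (fhat : ℝ → ℂ),
      (F (hf.toLp f) : ℝ → ℂ) =ᵐ[volume] fhat ∧
      (∫⁻ ω : ℝ, ∫⁻ ξ : ℝ, ENNReal.ofReal
          (‖fhat ξ‖ ^ 2 * ‖psiHatFn ((1 + |ω|)⁻¹ * (ξ - ω))‖ ^ 2 * (1 + |ω|)⁻¹)) = ⊤) :=
  stmt_19_general F hF
end
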